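/- arXiv:2306.06380 — 2 statements merged into one kernel-verified Lean document; each statement's English description precedes it below -/
import Mathlib

section
/- Let q, t be vertices of graphs G_Q, G_T. If there exists an injective function f : N(q) → N(t) such that T^{(l)}_{q_i} ⊂ T^{(l)}_{f(q_i)} for all q_i ∈ N(q), then T^{(l+1)}_q ⊂ T^{(l+1)}_t. -/
inductive RTree (α : Type) : Type where
  | node : α → List (RTree α) → RTree α

/-- Root-preserving injective embedding of rooted trees:
children of each node are mapped injectively to children of the image. -/
inductive RTree.Emb : {α β : Type} → RTree α → RTree β → Prop
  | node {α β : Type} (a : α) (b : β) (cs : List (RTree α)) (ds : List (RTree β))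
      (f : Fin cs.length → Fin ds.length) (hf : Function.Injective f)
      (h : ∀ i, RTree.Emb (cs.get i) (ds.get (f i))) :
      RTree.Emb (.node a cs) (.node b ds)

/-- Depth-`l` unfolding tree (WL subtree) rooted at a vertex. -/
noncomputable def unfoldTree {V : Type} [Fintype V] (G : SimpleGraph V) [DecidableRel G.Adj] :
    ℕ → V → RTree V
  | 0, v => .node v []
  | l + 1, v => .node v ((G.neighborFinset v).toList.map (unfoldTree G l))


/-- an injective f : N(q) → N(t) with depth-l subtree containments on
the neighbors gives the depth-(l+1) subtree containment at q, t. -/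
theorem injective_to_unfold_emb_succ
    {VQ VT : Type} [Fintype VQ] [Fintype VT]
    (GQ : SimpleGraph VQ) (GT : SimpleGraph VT)
    [DecidableRel GQ.Adj] [DecidableRel GT.Adj]
    (q : VQ) (t : VT) (l : ℕ)
    (f : GQ.neighborSet q → GT.neighborSet t) (hf : Function.Injective f)
    (hemb : ∀ qi : GQ.neighborSet q,
      RTree.Emb (unfoldTree GQ l (qi : VQ)) (unfoldTree GT l ((f qi : VT)))) :
    RTree.Emb (unfoldTree GQ (l + 1) q) (unfoldTree GT (l + 1) t) := by
  classical
  set Lq := (GQ.neighborFinset q).toList with hLq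
  set Lt := (GT.neighborFinset t).toList with hLt
  have memLq : ∀ i : Fin Lq.length, Lq.get i ∈ GQ.neighborSet q := by
    intro i
    simpa using Finset.mem_toList.1 (List.get_mem Lq i)
  have memLt : ∀ i : Fin Lq.length,
      ((f ⟨Lq.get i, memLq i⟩ : GT.neighborSet t) : VT) ∈ Lt := by
    intro i
    rw [hLt, Finset.mem_toList, SimpleGraph.mem_neighborFinset]
    exact (f ⟨Lq.get i, memLq i⟩).2
  rw [unfoldTree, unfoldTree]
  have hlen : (Lq.map (unfoldTree GQ l)).length = Lq.length := List.length_map _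
  have hlen' : (Lt.map (unfoldTree GT l)).length = Lt.length := List.length_map _
  refine RTree.Emb.node q t _ _
    (fun i => ⟨Lt.idxOf ((f ⟨Lq.get (Fin.cast hlen i), memLq _⟩ : GT.neighborSet t) : VT),
      by rw [hlen']; exact List.idxOf_lt_length_iff.2 (memLt _)⟩) ?_ ?_
  · intro i j hij
    have h1 : Lt.idxOf ((f ⟨Lq.get (Fin.cast hlen i), memLq _⟩ : GT.neighborSet t) : VT)
        = Lt.idxOf ((f ⟨Lq.get (Fin.cast hlen j), memLq _⟩ : GT.neighborSet t) : VT) :=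
      congrArg Fin.val hij
    have hxi := List.idxOf_lt_length_iff.2 (memLt (Fin.cast hlen i))
    have hxj := List.idxOf_lt_length_iff.2 (memLt (Fin.cast hlen j))
    have hx : Lt[Lt.idxOf ((f ⟨Lq.get (Fin.cast hlen i), memLq _⟩ : GT.neighborSet t) : VT)]'hxi
        = ((f ⟨Lq.get (Fin.cast hlen i), memLq _⟩ : GT.neighborSet t) : VT) :=
      List.getElem_idxOf hxi
    have hy : Lt[Lt.idxOf ((f ⟨Lq.get (Fin.cast hlen j), memLq _⟩ : GT.neighborSet t) : VT)]'hxj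
        = ((f ⟨Lq.get (Fin.cast hlen j), memLq _⟩ : GT.neighborSet t) : VT) :=
      List.getElem_idxOf hxj
    have h2 : ((f ⟨Lq.get (Fin.cast hlen i), memLq _⟩ : GT.neighborSet t) : VT)
        = ((f ⟨Lq.get (Fin.cast hlen j), memLq _⟩ : GT.neighborSet t) : VT) := by
      rw [← hx, ← hy]
      simp only [h1]
    have h3 := hf (Subtype.ext h2)
    have h4 : Lq.get (Fin.cast hlen i) = Lq.get (Fin.cast hlen j) :=
      congrArg Subtype.val h3
    have hnd : Lq.Nodup := Finset.nodup_toList _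
    have h5 := (List.nodup_iff_injective_get.1 hnd) h4
    exact Fin.ext (by simpa using congrArg Fin.val h5)
  · intro i
    have hget1 : (Lq.map (unfoldTree GQ l)).get i
        = unfoldTree GQ l (Lq.get (Fin.cast hlen i)) := by
      simp [List.get_eq_getElem]
    have hget2 : (Lt.map (unfoldTree GT l)).get
        ⟨Lt.idxOf ((f ⟨Lq.get (Fin.cast hlen i), memLq _⟩ : GT.neighborSet t) : VT),
          by rw [hlen']; exact List.idxOf_lt_length_iff.2 (memLt _)⟩
        = unfoldTree GT l ((f ⟨Lq.get (Fin.cast hlen i), memLq _⟩ : GT.neighborSet t) : VT) := by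
      simp [List.get_eq_getElem, List.getElem_idxOf (List.idxOf_lt_length_iff.2 (memLt (Fin.cast hlen i)))]
    rw [hget1, hget2]
    exact hemb ⟨Lq.get (Fin.cast hlen i), memLq _⟩
end

section
/- Let G_Q be a subgraph of G_T witnessed by an injective graph homomorphism ξ : V_Q → V_T. Then for every l ≥ 0 and every vertex q ∈ V_Q, the depth-l unfolding tree T^{(l)}_q of q in G_Q is subtree-isomorphic to a subtree of the depth-l unfolding tree T^{(l)}_{ξ(q)} of ξ(q) in G_T. -/
/-- a subgraph embedding (injective graph homomorphism) sends every
depth-l unfolding tree into the corresponding unfolding tree of the image vertex. -/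
theorem subgraph_unfold_emb
    {VQ VT : Type} [Fintype VQ] [Fintype VT]
    (GQ : SimpleGraph VQ) (GT : SimpleGraph VT)
    [DecidableRel GQ.Adj] [DecidableRel GT.Adj]
    (xi : VQ → VT) (hinj : Function.Injective xi)
    (hhom : ∀ u v, GQ.Adj u v → GT.Adj (xi u) (xi v)) :
    ∀ (l : ℕ) (q : VQ), RTree.Emb (unfoldTree GQ l q) (unfoldTree GT l (xi q)) := by
  intro l
  induction l with
  | zero =>
    intro q
    simp only [unfoldTree]
    exact RTree.Emb.node q (xi q) [] [] id Function.injective_id (fun i => i.elim0)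
  | succ l ih =>
    intro q
    simp only [unfoldTree]
    set L := (GQ.neighborFinset q).toList with hL
    set M := (GT.neighborFinset (xi q)).toList with hM
    have hmem : ∀ i : Fin L.length, ∃ j : Fin M.length, M.get j = xi (L.get i) := by
      intro i
      have h1 : L.get i ∈ GQ.neighborFinset q := by
        rw [← Finset.mem_toList]; exact List.get_mem L i
      have h2 : xi (L.get i) ∈ M := by
        rw [hM, Finset.mem_toList, SimpleGraph.mem_neighborFinset]
        exact hhom _ _ (SimpleGraph.mem_neighborFinset .. |>.1 h1)
      exact List.mem_iff_get.1 h2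
    choose g hg using hmem
    have hlen : (L.map (unfoldTree GQ l)).length = L.length := List.length_map _
    have hlen' : (M.map (unfoldTree GT l)).length = M.length := List.length_map _
    refine RTree.Emb.node _ _ _ _
      (fun i => Fin.cast hlen'.symm (g (Fin.cast hlen i))) ?_ ?_
    · intro i j hij
      have h1 : g (Fin.cast hlen i) = g (Fin.cast hlen j) := by
        apply Fin.ext
        simpa using congrArg Fin.val hij
      have h2 : xi (L.get (Fin.cast hlen i)) = xi (L.get (Fin.cast hlen j)) := by
        rw [← hg, ← hg, h1]
      have h3 : L.get (Fin.cast hlen i) = L.get (Fin.cast hlen j) := hinj h2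
      have hnd : L.Nodup := Finset.nodup_toList _
      have := (List.Nodup.get_inj_iff hnd).1 h3
      exact Fin.ext (by simpa using congrArg Fin.val this)
    · intro i
      have hc : (L.map (unfoldTree GQ l)).get i
          = unfoldTree GQ l (L.get (Fin.cast hlen i)) := by simp
      have hd : (M.map (unfoldTree GT l)).get (Fin.cast hlen'.symm (g (Fin.cast hlen i)))
          = unfoldTree GT l (M.get (g (Fin.cast hlen i))) := by simp
      rw [hc, hd, hg]
      exact ih _
end
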